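/- arXiv:2604.05187 — 3 statements merged into one kernel-verified Lean document; each statement's English description precedes it below -/
import Mathlib

section
/- Let f : ℝ → ℂ be continuous with compact support, let ω(k) = √(k⁴ + 1), and define φ, u : ℝ × ℝ → ℂ by φ(x, t) = (1/(2π)) ∫_ℝ exp(i·k·x − ω(k)·t)·f(k) dk and u(x, t) = (1/(2π)) ∫_ℝ exp(i·k·x − ω(k)·t)·(k² − ω(k))·f(k) dk. Then for all (x, t) ∈ ℝ², ∂φ/∂t (x,t) = ∂²φ/∂x² (x,t) + u(x,t). -/
open MeasureTheory

/-- The optimal state of the LQ-controlled heat equation, represented as a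
Fourier-type integral `φ(x,t) = (1/(2π)) ∫ exp(i k x − ω(k) t) f(k) dk`
with `ω(k) = √(k⁴ + 1)`. -/
noncomputable def heatOptState (f : ℝ → ℂ) (x t : ℝ) : ℂ :=
  (1 / (2 * Real.pi)) •
    ∫ k : ℝ, Complex.exp (Complex.I * (k : ℂ) * (x : ℂ)
      - (Real.sqrt (k ^ 4 + 1) : ℂ) * (t : ℂ)) * f k

/-- The optimal control of the LQ-controlled heat equation, represented as
`u(x,t) = (1/(2π)) ∫ exp(i k x − ω(k) t) (k² − ω(k)) f(k) dk`. -/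
noncomputable def heatOptControl (f : ℝ → ℂ) (x t : ℝ) : ℂ :=
  (1 / (2 * Real.pi)) •
    ∫ k : ℝ, Complex.exp (Complex.I * (k : ℂ) * (x : ℂ)
      - (Real.sqrt (k ^ 4 + 1) : ℂ) * (t : ℂ))
      * (((k : ℂ) ^ 2 - (Real.sqrt (k ^ 4 + 1) : ℂ)) * f k)

/-!
Since `f` has compact support and the integrands are smooth in `(x, t)`, the derivative of the
integrand is bounded uniformly for parameters near a point by a constant times `‖f‖`, so we may
differentiate under the integral sign. Differentiating `exp (i k x - ω(k) t)` multiplies it by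
`i k` in `x` and by `-ω(k)` in `t`, and the equation reduces to the pointwise identity
`-ω = (i k)² + (k² - ω)`.
-/

open Metric Filter

theorem hasDerivAt_integral_mul_of_hasCompactSupport {α : Type*} [TopologicalSpace α]
    [MeasurableSpace α] [OpensMeasurableSpace α] {μ : Measure α} [IsFiniteMeasureOnCompacts μ]
    {K K' : ℝ → α → ℂ} {g : α → ℂ}
    (hK : ∀ s, Continuous (K s)) (hK' : Continuous (Function.uncurry K'))
    (hderiv : ∀ s k, HasDerivAt (K · k) (K' s k) s)
    (hg : Continuous g) (hgs : HasCompactSupport g) (s₀ : ℝ) :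
    HasDerivAt (fun s => ∫ k, K s k * g k ∂μ) (∫ k, K' s₀ k * g k ∂μ) s₀ := by
  obtain ⟨C, hC⟩ :=
    ((isCompact_closedBall s₀ 1).prod hgs.isCompact).exists_bound_of_continuousOn hK'.continuousOn
  have hbound : ∀ k, ∀ s ∈ ball s₀ 1, ‖K' s k * g k‖ ≤ C * ‖g k‖ := by
    intro k s hs
    by_cases hk : k ∈ tsupport g
    · rw [norm_mul]
      gcongr
      exact hC (s, k) ⟨ball_subset_closedBall hs, hk⟩
    · simp [image_eq_zero_of_notMem_tsupport hk]
  exact (hasDerivAt_integral_of_dominated_loc_of_deriv_le (ball_mem_nhds s₀ one_pos)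
    (Eventually.of_forall fun s => ((hK s).mul hg).aestronglyMeasurable)
    (((hK s₀).mul hg).integrable_of_hasCompactSupport hgs.mul_left)
    ((hK'.uncurry_left s₀).mul hg).aestronglyMeasurable
    (Eventually.of_forall hbound)
    ((continuous_const.mul hg.norm).integrable_of_hasCompactSupport hgs.norm.mul_left)
    (Eventually.of_forall fun k s _ => (hderiv s k).mul_const (g k))).2

/-- With `w k = √(k ^ 4 + 1)`, `heatOptState f` and `heatOptControl f` are `1 / (2π)` times
this integral of `f` and of `(k² - w k) f`, definitionally. -/
noncomputable def dampedFourierIntegral (w : ℝ → ℝ) (g : ℝ → ℂ) (x t : ℝ) : ℂ :=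
  ∫ k : ℝ, Complex.exp (Complex.I * k * x - (w k : ℂ) * t) * g k

section DampedFourierIntegral

variable {w : ℝ → ℝ} {g : ℝ → ℂ}

theorem integrable_dampedFourierIntegrand (hw : Continuous w) (hg : Continuous g)
    (hgs : HasCompactSupport g) (x t : ℝ) :
    Integrable fun k : ℝ => Complex.exp (Complex.I * k * x - (w k : ℂ) * t) * g k :=
  (Continuous.mul (by fun_prop) hg).integrable_of_hasCompactSupport hgs.mul_left

theorem dampedFourierIntegral_add {g₁ g₂ : ℝ → ℂ} (hw : Continuous w)
    (hg₁ : Continuous g₁) (hg₁s : HasCompactSupport g₁)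
    (hg₂ : Continuous g₂) (hg₂s : HasCompactSupport g₂) (x t : ℝ) :
    dampedFourierIntegral w (fun k => g₁ k + g₂ k) x t
      = dampedFourierIntegral w g₁ x t + dampedFourierIntegral w g₂ x t := by
  simp only [dampedFourierIntegral, mul_add]
  exact integral_add (integrable_dampedFourierIntegrand hw hg₁ hg₁s x t)
    (integrable_dampedFourierIntegrand hw hg₂ hg₂s x t)

theorem hasDerivAt_dampedFourierIntegral_space (hw : Continuous w) (hg : Continuous g)
    (hgs : HasCompactSupport g) (x t : ℝ) :
    HasDerivAt (dampedFourierIntegral w g · t)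
      (dampedFourierIntegral w (fun k => Complex.I * k * g k) x t) x := by
  have hderiv : ∀ y k : ℝ,
      HasDerivAt (fun y : ℝ => Complex.exp (Complex.I * k * y - (w k : ℂ) * t))
        (Complex.exp (Complex.I * k * y - (w k : ℂ) * t) * (Complex.I * k)) y := by
    intro y k
    simpa using (((hasDerivAt_id y).ofReal_comp.const_mul (Complex.I * k)).sub_const
      ((w k : ℂ) * t)).cexp
  simpa only [dampedFourierIntegral, mul_assoc] using
    hasDerivAt_integral_mul_of_hasCompactSupport (μ := volume) (fun y => by fun_prop)
      (by fun_prop) hderiv hg hgs x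

theorem hasDerivAt_dampedFourierIntegral_time (hw : Continuous w) (hg : Continuous g)
    (hgs : HasCompactSupport g) (x t : ℝ) :
    HasDerivAt (dampedFourierIntegral w g x ·)
      (dampedFourierIntegral w (fun k => -(w k : ℂ) * g k) x t) t := by
  have hderiv : ∀ s k : ℝ,
      HasDerivAt (fun s : ℝ => Complex.exp (Complex.I * k * x - (w k : ℂ) * s))
        (Complex.exp (Complex.I * k * x - (w k : ℂ) * s) * -(w k : ℂ)) s := by
    intro s k
    simpa using (((hasDerivAt_id s).ofReal_comp.const_mul (w k : ℂ)).const_sub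
      (Complex.I * k * x)).cexp
  simpa only [dampedFourierIntegral, mul_assoc] using
    hasDerivAt_integral_mul_of_hasCompactSupport (μ := volume) (fun s => by fun_prop)
      (by fun_prop) hderiv hg hgs t

end DampedFourierIntegral

/-- for `f` continuous with compact support, the integral
representations `φ` and `u` satisfy the state equation
`∂φ/∂t = ∂²φ/∂x² + u` on all of `ℝ²`. -/
theorem heatOpt_state_equation (f : ℝ → ℂ)
    (hf : Continuous f) (hsupp : HasCompactSupport f) :
    ∀ x t : ℝ,
      deriv (fun s : ℝ => heatOptState f x s) t
        = deriv (fun y : ℝ => deriv (fun z : ℝ => heatOptState f z t) y) x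
          + heatOptControl f x t := by
  intro x t
  set ω : ℝ → ℝ := fun k => Real.sqrt (k ^ 4 + 1)
  set c : ℝ := 1 / (2 * Real.pi)
  have hω : Continuous ω := by fun_prop
  have hik : Continuous fun k : ℝ => Complex.I * k * f k := by fun_prop
  have hiks : HasCompactSupport fun k : ℝ => Complex.I * k * f k := hsupp.mul_left
  have hφt : HasDerivAt (heatOptState f x ·)
      (c • dampedFourierIntegral ω (fun k => -(ω k : ℂ) * f k) x t) t :=
    (hasDerivAt_dampedFourierIntegral_time hω hf hsupp x t).const_smul c
  have hφx : ∀ y, HasDerivAt (heatOptState f · t)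
      (c • dampedFourierIntegral ω (fun k => Complex.I * k * f k) y t) y :=
    fun y => (hasDerivAt_dampedFourierIntegral_space hω hf hsupp y t).const_smul c
  have hφxx :
      HasDerivAt (fun y => c • dampedFourierIntegral ω (fun k => Complex.I * k * f k) y t)
        (c • dampedFourierIntegral ω (fun k => Complex.I * k * (Complex.I * k * f k)) x t) x :=
    (hasDerivAt_dampedFourierIntegral_space hω hik hiks x t).const_smul c
  have hsplit : dampedFourierIntegral ω (fun k => -(ω k : ℂ) * f k) x t
      = dampedFourierIntegral ω (fun k => Complex.I * k * (Complex.I * k * f k)) x t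
        + dampedFourierIntegral ω (fun k => ((k : ℂ) ^ 2 - ω k) * f k) x t := by
    rw [← dampedFourierIntegral_add hω (by fun_prop) (by exact hiks.mul_left) (by fun_prop)
      (by exact hsupp.mul_left)]
    congr 1 with k
    linear_combination (-(k : ℂ) ^ 2 * f k) * Complex.I_sq
  rw [hφt.deriv, funext fun y => (hφx y).deriv, hφxx.deriv, hsplit, smul_add]
  rfl
end

section
/- Let f : ℝ → ℂ be continuous with compact support, let ω(k) = √(k⁴ + 1), and define φ, u : ℝ × ℝ → ℂ by φ(x, t) = (1/(2π)) ∫_ℝ exp(i·k·x − ω(k)·t)·f(k) dk and u(x, t) = (1/(2π)) ∫_ℝ exp(i·k·x − ω(k)·t)·(k² − ω(k))·f(k) dk. Then for all (x, t) ∈ ℝ², φ(x,t) = ∂u/∂t (x,t) + ∂²u/∂x² (x,t). -/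
open MeasureTheory

/-!
On a single mode `exp(i k x − ω(k) t)`, `∂/∂t` acts as multiplication by `−ω(k)` and `∂²/∂x²` as
multiplication by `(i k)² = −k²`. Since the amplitude has compact support in `k`, the integrand and
its parameter derivatives are uniformly bounded by an integrable function near every point, so the
derivatives pass under the integral. Hence `∂u/∂t + ∂²u/∂x²` is the superposition with amplitude
`(−ω − k²)(k² − ω) f = (ω² − k⁴) f = f`, which is `φ`.
-/

open Complex

theorem hasDerivAt_integral_cexp_mul_add {α : Type*} [TopologicalSpace α] [MeasurableSpace α]
    [OpensMeasurableSpace α] {μ : Measure α} [IsFiniteMeasureOnCompacts μ] {a b g : α → ℂ}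
    (ha : Continuous a) (hb : Continuous b) (hg : Continuous g) (hsg : HasCompactSupport g)
    (s₀ : ℝ) :
    HasDerivAt (fun s : ℝ => ∫ k, cexp (a k * s + b k) * g k ∂μ)
      (∫ k, cexp (a k * s₀ + b k) * (a k * g k) ∂μ) s₀ := by
  have hF : ∀ s : ℝ, Continuous fun k => cexp (a k * s + b k) * g k := fun s => by fun_prop
  have hF' : Continuous fun p : α × ℝ => cexp (a p.1 * p.2 + b p.1) * (a p.1 * g p.1) := by
    fun_prop
  obtain ⟨C, hC⟩ := (hsg.prod (isCompact_Icc (a := s₀ - 1) (b := s₀ + 1))).exists_bound_of_continuousOn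
    hF'.continuousOn
  have h_bound : ∀ k, ∀ s ∈ Metric.ball s₀ 1,
      ‖cexp (a k * s + b k) * (a k * g k)‖ ≤ (tsupport g).indicator (fun _ => C) k := by
    intro k s hs
    by_cases hk : k ∈ tsupport g
    · rw [Set.indicator_of_mem hk]
      rw [Metric.mem_ball, Real.dist_eq, abs_lt] at hs
      exact hC (k, s) ⟨hk, by constructor <;> linarith [hs.1, hs.2]⟩
    · simp [Set.indicator_of_notMem hk, image_eq_zero_of_notMem_tsupport hk]
  have h_diff : ∀ k, ∀ s : ℝ, HasDerivAt (fun s : ℝ => cexp (a k * s + b k) * g k)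
      (cexp (a k * s + b k) * (a k * g k)) s := fun k s => by
    have := ((((hasDerivAt_id s).ofReal_comp).const_mul (a k)).add_const (b k)).cexp.mul_const (g k)
    exact this.congr_deriv (by simp only [id, ofReal_one, mul_one]; ring)
  exact (hasDerivAt_integral_of_dominated_loc_of_deriv_le (Metric.ball_mem_nhds s₀ one_pos)
    (.of_forall fun s => (hF s).aestronglyMeasurable)
    ((hF s₀).integrable_of_hasCompactSupport hsg.mul_left)
    (hF'.comp (Continuous.prodMk_left s₀)).aestronglyMeasurable
    (.of_forall h_bound)
    ((integrable_indicator_iff (isClosed_tsupport g).measurableSet).2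
      (integrableOn_const hsg.isCompact.measure_lt_top.ne))
    (.of_forall fun k s _ => h_diff k s)).2

noncomputable def heatFreq (k : ℝ) : ℂ := (Real.sqrt (k ^ 4 + 1) : ℂ)

/-- `heatOptState f = (1 / (2π)) • heatWave f` and
`heatOptControl f = (1 / (2π)) • heatWave (fun k => (k ^ 2 - heatFreq k) * f k)` definitionally. -/
noncomputable def heatWave (g : ℝ → ℂ) (x t : ℝ) : ℂ :=
  ∫ k : ℝ, cexp (I * k * x - heatFreq k * t) * g k

@[fun_prop]
theorem continuous_heatFreq : Continuous heatFreq := by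
  unfold heatFreq
  fun_prop

theorem heatFreq_sq (k : ℝ) : heatFreq k ^ 2 = (k : ℂ) ^ 4 + 1 := by
  rw [heatFreq, ← ofReal_pow, Real.sq_sqrt (by positivity)]
  push_cast
  ring

theorem neg_heatFreq_sub_sq_mul_sq_sub_heatFreq (k : ℝ) :
    (-heatFreq k - (k : ℂ) ^ 2) * ((k : ℂ) ^ 2 - heatFreq k) = 1 := by
  linear_combination heatFreq_sq k

section heatWave

variable {g h : ℝ → ℂ}

theorem heatWave_add (hg : Continuous g) (hsg : HasCompactSupport g)
    (hh : Continuous h) (hsh : HasCompactSupport h) (x t : ℝ) :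
    heatWave g x t + heatWave h x t = heatWave (fun k => g k + h k) x t := by
  rw [heatWave, heatWave, heatWave, ← integral_add]
  · simp only [mul_add]
  · exact Continuous.integrable_of_hasCompactSupport (by fun_prop) hsg.mul_left
  · exact Continuous.integrable_of_hasCompactSupport (by fun_prop) hsh.mul_left

theorem hasDerivAt_heatWave_time (hg : Continuous g) (hsg : HasCompactSupport g) (x t : ℝ) :
    HasDerivAt (heatWave g x) (heatWave (fun k => -heatFreq k * g k) x t) t := by
  have := hasDerivAt_integral_cexp_mul_add (μ := volume) (a := fun k => -heatFreq k)
    (b := fun k : ℝ => I * k * x) (by fun_prop) (by fun_prop) hg hsg t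
  unfold heatWave
  simpa only [sub_eq_neg_add, neg_mul] using this

theorem hasDerivAt_heatWave_space (hg : Continuous g) (hsg : HasCompactSupport g) (x t : ℝ) :
    HasDerivAt (heatWave g · t) (heatWave (fun k => I * k * g k) x t) x := by
  have := hasDerivAt_integral_cexp_mul_add (μ := volume) (a := fun k : ℝ => I * k)
    (b := fun k => -(heatFreq k * t)) (by fun_prop) (by fun_prop) hg hsg x
  unfold heatWave
  simpa only [sub_eq_add_neg] using this

end heatWave

/-- for `f` continuous with compact support, the integral
representations `φ` and `u` satisfy the adjoint equation
`φ = ∂u/∂t + ∂²u/∂x²` of the first-order optimality system, on all of `ℝ²`. -/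
theorem heatOpt_adjoint_equation (f : ℝ → ℂ)
    (hf : Continuous f) (hsupp : HasCompactSupport f) :
    ∀ x t : ℝ,
      heatOptState f x t
        = deriv (fun s : ℝ => heatOptControl f x s) t
          + deriv (fun y : ℝ => deriv (fun z : ℝ => heatOptControl f z t) y) x := by
  intro x t
  set g : ℝ → ℂ := fun k => ((k : ℂ) ^ 2 - heatFreq k) * f k
  have hg : Continuous g := by fun_prop
  have hsg : HasCompactSupport g := hsupp.mul_left
  have hdt : deriv (fun s => heatOptControl f x s) t
      = (1 / (2 * Real.pi)) • heatWave (fun k => -heatFreq k * g k) x t :=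
    ((hasDerivAt_heatWave_time hg hsg x t).const_smul (1 / (2 * Real.pi))).deriv
  have hdx : ∀ y, deriv (fun z => heatOptControl f z t) y
      = (1 / (2 * Real.pi)) • heatWave (fun k => I * k * g k) y t := fun y =>
    ((hasDerivAt_heatWave_space hg hsg y t).const_smul (1 / (2 * Real.pi))).deriv
  have hdxx : deriv (fun y => (1 / (2 * Real.pi)) • heatWave (fun k => I * k * g k) y t) x
      = (1 / (2 * Real.pi)) • heatWave (fun k => I * k * (I * k * g k)) x t :=
    ((hasDerivAt_heatWave_space (by fun_prop) hsg.mul_left x t).const_smul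
      (1 / (2 * Real.pi))).deriv
  rw [hdt, funext hdx, hdxx, ← smul_add,
    heatWave_add (g := fun k => -heatFreq k * g k) (h := fun k => I * k * (I * k * g k))
      (by fun_prop) hsg.mul_left (by fun_prop) hsg.mul_left.mul_left]
  show (1 / (2 * Real.pi)) • heatWave f x t = _
  congr 2 with k
  linear_combination -f k * neg_heatFreq_sub_sq_mul_sq_sub_heatFreq k
    - (k : ℂ) ^ 2 * g k * I_sq
end

section
/- Fix a ∈ ℝ, x₀ ∈ ℝ, and set p = a + √(a² + 1). Let x : ℝ → ℝ be differentiable on [0, ∞) with x(0) = x₀ and x(t) → 0 as t → ∞, and set u(t) = x'(t) − a·x(t) (so that x' = a x + u). Assume that t ↦ x(t)² and t ↦ u(t)² are integrable on [0, ∞). Then ∫₀^∞ (x(t)² + u(t)²) dt ≥ p·x₀². -/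
/-!
Completing the square with the Riccati root `p` (`p² - 2ap = 1`) gives, pointwise,
`x² + u² = (u + p x)² - d/dt (p x²)` along `x' = a x + u`. Integrating over `(0, ∞)`, the
derivative term contributes `p x(0)²` because `x → 0`, and the square is nonnegative.
-/

open MeasureTheory Set Filter Topology

lemma sq_sub_two_mul_mul_eq_one_of_eq_add_sqrt {a p : ℝ} (hp : p = a + √(a ^ 2 + 1)) :
    p ^ 2 - 2 * a * p = 1 := by
  subst hp
  nlinarith [Real.sq_sqrt (by positivity : (0 : ℝ) ≤ a ^ 2 + 1)]

lemma sq_add_sq_eq_sq_sub_of_riccati {a p : ℝ} (hp : p ^ 2 - 2 * a * p = 1) (x u : ℝ) :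
    x ^ 2 + u ^ 2 = (u + p * x) ^ 2 - p * (2 * x * (a * x + u)) := by
  linear_combination (-x ^ 2) * hp

lemma MeasureTheory.Integrable.mul_of_integrable_sq {α : Type*} [MeasurableSpace α]
    {μ : Measure α} {f g : α → ℝ} (hf : AEStronglyMeasurable f μ) (hg : AEStronglyMeasurable g μ)
    (hf2 : Integrable (fun t => f t ^ 2) μ) (hg2 : Integrable (fun t => g t ^ 2) μ) :
    Integrable (f * g) μ :=
  ((memLp_two_iff_integrable_sq hf).2 hf2).integrable_mul ((memLp_two_iff_integrable_sq hg).2 hg2)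

lemma DifferentiableOn.hasDerivAt_derivWithin_Ici {f : ℝ → ℝ} {c t : ℝ}
    (hf : DifferentiableOn ℝ f (Ici c)) (ht : t ∈ Ioi c) :
    HasDerivAt f (derivWithin f (Ici c) t) t :=
  (hf t (mem_Ici.2 ht.le)).hasDerivWithinAt.hasDerivAt (Ici_mem_nhds ht)

lemma integral_Ioi_two_mul_mul_deriv_eq {x x' : ℝ → ℝ} {c : ℝ}
    (hc : ContinuousWithinAt x (Ici c) c) (hderiv : ∀ t ∈ Ioi c, HasDerivAt x (x' t) t)
    (hint : IntegrableOn (fun t => x t * x' t) (Ioi c)) (hlim : Tendsto x atTop (𝓝 0)) :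
    ∫ t in Ioi c, 2 * x t * x' t = -x c ^ 2 := by
  have hsq_lim : Tendsto (fun t => x t ^ 2) atTop (𝓝 0) := by simpa using hlim.pow 2
  have hftc := integral_Ioi_of_hasDerivAt_of_tendsto (hc.pow 2)
    (fun t ht => by simpa [mul_assoc] using (hderiv t ht).pow 2) (hint.const_mul 2) hsq_lim
  simpa [mul_assoc] using hftc

theorem integral_sq_add_sq_eq_of_riccati {a p c : ℝ} (hp : p ^ 2 - 2 * a * p = 1) {x u : ℝ → ℝ}
    (hc : ContinuousWithinAt x (Ici c) c) (hderiv : ∀ t ∈ Ioi c, HasDerivAt x (a * x t + u t) t)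
    (hlim : Tendsto x atTop (𝓝 0)) (hx2 : IntegrableOn (fun t => x t ^ 2) (Ioi c))
    (hu2 : IntegrableOn (fun t => u t ^ 2) (Ioi c)) :
    ∫ t in Ioi c, (x t ^ 2 + u t ^ 2) = p * x c ^ 2 + ∫ t in Ioi c, (u t + p * x t) ^ 2 := by
  have hxm : AEStronglyMeasurable x (volume.restrict (Ioi c)) :=
    ContinuousOn.aestronglyMeasurable (fun t ht => (hderiv t ht).continuousAt.continuousWithinAt)
      measurableSet_Ioi
  have hum : AEStronglyMeasurable u (volume.restrict (Ioi c)) := by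
    refine ((measurable_deriv x).aestronglyMeasurable.sub (hxm.const_mul a)).congr ?_
    filter_upwards [ae_restrict_mem measurableSet_Ioi] with t ht
    simp only [Pi.sub_apply, (hderiv t ht).deriv]
    ring
  have hxu : IntegrableOn (fun t => x t * u t) (Ioi c) := Integrable.mul_of_integrable_sq hxm hum hx2 hu2
  have hxx' : IntegrableOn (fun t => x t * (a * x t + u t)) (Ioi c) :=
    IntegrableOn.congr_fun ((hx2.const_mul a).add hxu) (fun t _ => by simp only [Pi.add_apply]; ring)
      measurableSet_Ioi
  have hsq : IntegrableOn (fun t => (u t + p * x t) ^ 2) (Ioi c) :=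
    IntegrableOn.congr_fun ((hu2.add (hxu.const_mul (2 * p))).add (hx2.const_mul (p ^ 2)))
      (fun t _ => by simp only [Pi.add_apply]; ring) measurableSet_Ioi
  have hderiv_term : IntegrableOn (fun t => p * (2 * x t * (a * x t + u t))) (Ioi c) :=
    IntegrableOn.congr_fun (hxx'.const_mul (2 * p)) (fun t _ => by ring) measurableSet_Ioi
  calc ∫ t in Ioi c, (x t ^ 2 + u t ^ 2)
      = ∫ t in Ioi c, ((u t + p * x t) ^ 2 - p * (2 * x t * (a * x t + u t))) := by
        simp only [sq_add_sq_eq_sq_sub_of_riccati hp]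
    _ = (∫ t in Ioi c, (u t + p * x t) ^ 2) - p * ∫ t in Ioi c, 2 * x t * (a * x t + u t) := by
        rw [integral_sub hsq hderiv_term, integral_const_mul]
    _ = p * x c ^ 2 + ∫ t in Ioi c, (u t + p * x t) ^ 2 := by
        rw [integral_Ioi_two_mul_mul_deriv_eq hc hderiv hxx' hlim]
        ring

/-- scalar LQR lower bound. Fix `a, x₀ ∈ ℝ` and let
`p = a + √(a² + 1)` (the positive root of the Riccati equation `p² − 2ap − 1 = 0`).
For any trajectory `x` differentiable on `[0,∞)` with `x 0 = x₀` and `x t → 0`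
as `t → ∞`, with control `u(t) = x'(t) − a·x(t)` (so that `x' = a x + u`), and
with `x²` and `u²` integrable on `[0,∞)`, the cost satisfies
`∫₀^∞ (x² + u²) ≥ p·x₀²`. -/
theorem scalar_lqr_lower_bound
    (a x₀ p : ℝ) (hp : p = a + Real.sqrt (a ^ 2 + 1))
    (x : ℝ → ℝ)
    (hdiff : DifferentiableOn ℝ x (Set.Ici (0 : ℝ)))
    (hx0 : x 0 = x₀)
    (hlim : Filter.Tendsto x Filter.atTop (nhds 0))
    (u : ℝ → ℝ)
    (hu : ∀ t ∈ Set.Ici (0 : ℝ), u t = derivWithin x (Set.Ici (0 : ℝ)) t - a * x t)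
    (hx2 : IntegrableOn (fun t => x t ^ 2) (Set.Ici (0 : ℝ)))
    (hu2 : IntegrableOn (fun t => u t ^ 2) (Set.Ici (0 : ℝ))) :
    p * x₀ ^ 2 ≤ ∫ t in Set.Ici (0 : ℝ), (x t ^ 2 + u t ^ 2) := by
  have hderiv : ∀ t ∈ Ioi (0 : ℝ), HasDerivAt x (a * x t + u t) t := fun t ht => by
    convert hdiff.hasDerivAt_derivWithin_Ici ht using 1
    rw [hu t (Ioi_subset_Ici_self ht)]
    ring
  rw [integral_Ici_eq_integral_Ioi,
    integral_sq_add_sq_eq_of_riccati (sq_sub_two_mul_mul_eq_one_of_eq_add_sqrt hp)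
      (hdiff.continuousOn 0 self_mem_Ici) hderiv hlim
      (hx2.mono_set Ioi_subset_Ici_self) (hu2.mono_set Ioi_subset_Ici_self), hx0]
  exact le_add_of_nonneg_right (integral_nonneg fun t => sq_nonneg _)
end
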